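/- arXiv:2501.04031 — 3 statements merged into one kernel-verified Lean document; each statement's English description precedes it below -/
import Mathlib

section
/- Let $V$ be a Hilbert space, $s_1 < s_2$, and $\rho$ a nonzero finite positive measure on $[s_1,s_2]$. Define for $v \in H^1((s_1,s_2),V)$ the norm $\|v\|_{\mathbb V,\rho}^2 = \int_{[s_1,s_2]}\|v(s)\|_V^2\,d\rho(s) + \int_{s_1}^{s_2}\|\partial_\lambda v(s)\|_V^2\,ds$ (using the continuous representative). Then $\|\cdot\|_{\mathbb V,\rho}$ is equivalent to the standard norm $\|\cdot\|_{\mathbb V}$ (with $\rho$ replaced by Lebesgue measure): there exist constants $c, C > 0$ depending only on $\rho$, $s_1$, $s_2$ such that $c\|v\|_{\mathbb V} \le \|v\|_{\mathbb V,\rho} \le C\|v\|_{\mathbb V}$ for all $v$. -/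
open MeasureTheory intervalIntegral Set

/-!
If `v' = ∂v` on `[a, b]`, then `‖v y - v x‖ ≤ ∫ ‖v'‖ ≤ √(b - a) ‖v'‖_{L²}` for all `x, y ∈ [a, b]`, so
`‖v y‖² ≤ 2 ‖v x‖² + 2 (b - a) ‖v'‖²_{L²}`. Averaging over `x` against one finite measure `μ` and
then integrating over `y` against another `ν` controls `∫ ‖v‖² dν` by `∫ ‖v‖² dμ` and `‖v'‖²_{L²}`.
Taking `(μ, ν) = (ρ, Lebesgue)` and `(Lebesgue, ρ)` gives the two comparisons of norms.
-/

theorem sq_intervalIntegral_le_mul_intervalIntegral_sq {f : ℝ → ℝ} {a b : ℝ} (hab : a ≤ b)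
    (hf : IntervalIntegrable f volume a b)
    (hf2 : IntervalIntegrable (fun x => f x ^ 2) volume a b) :
    (∫ x in a..b, f x) ^ 2 ≤ (b - a) * ∫ x in a..b, f x ^ 2 := by
  -- `t ↦ ∫ (t - f)²` is a nonnegative quadratic polynomial, so its discriminant is `≤ 0`.
  have hquad : ∀ t : ℝ, ∫ x in a..b, (t - f x) ^ 2 =
      (b - a) * (t * t) + (-2 * ∫ x in a..b, f x) * t + ∫ x in a..b, f x ^ 2 := by
    intro t
    have hexpand : (fun x => (t - f x) ^ 2) = fun x => (t ^ 2 - 2 * t * f x) + f x ^ 2 := by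
      ext x; ring
    rw [hexpand, integral_add (intervalIntegrable_const.sub (hf.const_mul _)) hf2,
      integral_sub intervalIntegrable_const (hf.const_mul _), intervalIntegral.integral_const,
      intervalIntegral.integral_const_mul, smul_eq_mul]
    ring
  have hdiscrim := discrim_le_zero fun t =>
    (hquad t).symm ▸ integral_nonneg hab fun x _ => sq_nonneg (t - f x)
  rw [discrim] at hdiscrim
  linarith

theorem add_le_mul_add_of_mul_le {p q r x y z : ℝ} (hp : 0 < p) (hq : 0 ≤ q) (hr : 0 ≤ r)
    (hy : 0 ≤ y) (hz : 0 ≤ z) (h : p * x ≤ q * y + r * z) :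
    x + z ≤ (q / p + r / p + 1) * (y + z) := by
  have hx : x ≤ q / p * y + r / p * z := by
    rw [div_mul_eq_mul_div, div_mul_eq_mul_div, ← add_div, le_div_iff₀ hp]
    linarith
  nlinarith [mul_nonneg (div_nonneg hq hp.le) hz, mul_nonneg (div_nonneg hr hp.le) hy]

theorem inv_sqrt_mul_sqrt_le_sqrt {x y K : ℝ} (hK : 0 < K) (h : x ≤ K * y) :
    (√K)⁻¹ * √x ≤ √y := by
  rw [inv_mul_le_iff₀ (Real.sqrt_pos.mpr hK), ← Real.sqrt_mul hK.le]
  exact Real.sqrt_le_sqrt h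

theorem sqrt_le_sqrt_mul_sqrt {x y K : ℝ} (hK : 0 ≤ K) (h : x ≤ K * y) : √x ≤ √K * √y := by
  rw [← Real.sqrt_mul hK]
  exact Real.sqrt_le_sqrt h

section PrimitiveOnIcc

variable {E : Type*} [NormedAddCommGroup E] [NormedSpace ℝ E] {v v' : ℝ → E} {a b x y : ℝ}

theorem norm_sub_le_intervalIntegral_norm (hab : a ≤ b) (hv' : IntervalIntegrable v' volume a b)
    (hftc : ∀ x ∈ Icc a b, ∀ y ∈ Icc a b, v y = v x + ∫ s in x..y, v' s)
    (hx : x ∈ Icc a b) (hy : y ∈ Icc a b) :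
    ‖v y - v x‖ ≤ ∫ s in a..b, ‖v' s‖ := by
  rw [hftc x hx y hy, add_sub_cancel_left]
  calc ‖∫ s in x..y, v' s‖ ≤ |∫ s in x..y, ‖v' s‖| := norm_integral_le_abs_integral_norm
    _ ≤ |∫ s in a..b, ‖v' s‖| := by
      refine abs_integral_mono_interval ?_ (Filter.Eventually.of_forall fun _ => norm_nonneg _)
        hv'.norm
      rw [uIoc_of_le hab, uIoc]
      exact Ioc_subset_Ioc (le_min hx.1 hy.1) (max_le hx.2 hy.2)
    _ = ∫ s in a..b, ‖v' s‖ := abs_of_nonneg (integral_nonneg hab fun _ _ => norm_nonneg _)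

theorem sq_norm_le_two_mul_sq_norm_add (hab : a ≤ b) (hv' : IntervalIntegrable v' volume a b)
    (hv'2 : IntervalIntegrable (fun s => ‖v' s‖ ^ 2) volume a b)
    (hftc : ∀ x ∈ Icc a b, ∀ y ∈ Icc a b, v y = v x + ∫ s in x..y, v' s)
    (hx : x ∈ Icc a b) (hy : y ∈ Icc a b) :
    ‖v y‖ ^ 2 ≤ 2 * ‖v x‖ ^ 2 + 2 * ((b - a) * ∫ s in a..b, ‖v' s‖ ^ 2) := by
  have hdiff := norm_sub_le_intervalIntegral_norm hab hv' hftc hx hy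
  have hCS := sq_intervalIntegral_le_mul_intervalIntegral_sq hab hv'.norm hv'2
  calc ‖v y‖ ^ 2 ≤ (‖v x‖ + ‖v y - v x‖) ^ 2 := by
        gcongr; exact norm_le_norm_add_norm_sub' (v y) (v x)
    _ ≤ 2 * (‖v x‖ ^ 2 + ‖v y - v x‖ ^ 2) := add_sq_le
    _ ≤ 2 * (‖v x‖ ^ 2 + (∫ s in a..b, ‖v' s‖) ^ 2) := by gcongr
    _ ≤ 2 * ‖v x‖ ^ 2 + 2 * ((b - a) * ∫ s in a..b, ‖v' s‖ ^ 2) := by linarith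

variable (μ ν : Measure ℝ) [IsFiniteMeasureOnCompacts μ] [IsFiniteMeasureOnCompacts ν]

theorem measureReal_mul_sq_norm_le (hab : a ≤ b) (hv : Continuous v)
    (hv' : IntervalIntegrable v' volume a b)
    (hv'2 : IntervalIntegrable (fun s => ‖v' s‖ ^ 2) volume a b)
    (hftc : ∀ x ∈ Icc a b, ∀ y ∈ Icc a b, v y = v x + ∫ s in x..y, v' s) (hy : y ∈ Icc a b) :
    μ.real (Icc a b) * ‖v y‖ ^ 2 ≤ 2 * ∫ x in Icc a b, ‖v x‖ ^ 2 ∂μ +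
      2 * μ.real (Icc a b) * ((b - a) * ∫ s in a..b, ‖v' s‖ ^ 2) := by
  have hconst : ∀ c : ℝ, IntegrableOn (fun _ => c) (Icc a b) μ := fun c =>
    integrableOn_const isCompact_Icc.measure_lt_top.ne
  have hsq : IntegrableOn (fun x => 2 * ‖v x‖ ^ 2) (Icc a b) μ :=
    (hv.norm.pow 2).continuousOn.integrableOn_compact isCompact_Icc |>.const_mul 2
  have hmono := setIntegral_mono_on (hconst _) (hsq.add (hconst _)) measurableSet_Icc
    fun x hx => sq_norm_le_two_mul_sq_norm_add hab hv' hv'2 hftc hx hy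
  rw [setIntegral_const, integral_add' hsq (hconst _), MeasureTheory.integral_const_mul, setIntegral_const,
    smul_eq_mul, smul_eq_mul] at hmono
  linarith

theorem measureReal_mul_setIntegral_sq_norm_le (hab : a ≤ b) (hv : Continuous v)
    (hv' : IntervalIntegrable v' volume a b)
    (hv'2 : IntervalIntegrable (fun s => ‖v' s‖ ^ 2) volume a b)
    (hftc : ∀ x ∈ Icc a b, ∀ y ∈ Icc a b, v y = v x + ∫ s in x..y, v' s) :
    μ.real (Icc a b) * ∫ y in Icc a b, ‖v y‖ ^ 2 ∂ν ≤
      2 * ν.real (Icc a b) * ∫ x in Icc a b, ‖v x‖ ^ 2 ∂μ +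
        2 * μ.real (Icc a b) * ν.real (Icc a b) * (b - a) * ∫ s in a..b, ‖v' s‖ ^ 2 := by
  have hsq : IntegrableOn (fun y => μ.real (Icc a b) * ‖v y‖ ^ 2) (Icc a b) ν :=
    (hv.norm.pow 2).continuousOn.integrableOn_compact isCompact_Icc |>.const_mul _
  have hmono := setIntegral_mono_on hsq
    (integrableOn_const isCompact_Icc.measure_lt_top.ne) measurableSet_Icc
    fun y hy => measureReal_mul_sq_norm_le μ hab hv hv' hv'2 hftc hy
  rw [MeasureTheory.integral_const_mul, setIntegral_const, smul_eq_mul] at hmono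
  linarith

end PrimitiveOnIcc

theorem stmt2_general {V : Type*} [NormedAddCommGroup V] [InnerProductSpace ℝ V]
    (s₁ s₂ : ℝ) (hs : s₁ < s₂) (ρ : Measure ℝ) [IsFiniteMeasure ρ]
    (hρpos : 0 < ρ (Set.Icc s₁ s₂)) :
    ∃ c C : ℝ, 0 < c ∧ 0 < C ∧
      ∀ v v' : ℝ → V, Continuous v →
        IntervalIntegrable v' volume s₁ s₂ →
        IntervalIntegrable (fun s => ‖v s‖ ^ 2) volume s₁ s₂ →
        IntervalIntegrable (fun s => ‖v' s‖ ^ 2) volume s₁ s₂ →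
        (∀ a ∈ Set.Icc s₁ s₂, ∀ b ∈ Set.Icc s₁ s₂, v b = v a + ∫ s in a..b, v' s) →
        c * Real.sqrt ((∫ s in s₁..s₂, ‖v s‖ ^ 2) + ∫ s in s₁..s₂, ‖v' s‖ ^ 2) ≤
            Real.sqrt ((∫ s in Set.Icc s₁ s₂, ‖v s‖ ^ 2 ∂ρ) + ∫ s in s₁..s₂, ‖v' s‖ ^ 2) ∧
          Real.sqrt ((∫ s in Set.Icc s₁ s₂, ‖v s‖ ^ 2 ∂ρ) + ∫ s in s₁..s₂, ‖v' s‖ ^ 2) ≤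
            C * Real.sqrt ((∫ s in s₁..s₂, ‖v s‖ ^ 2) + ∫ s in s₁..s₂, ‖v' s‖ ^ 2) := by
  set L := s₂ - s₁
  set P := ρ.real (Icc s₁ s₂)
  have hL : 0 < L := sub_pos.mpr hs
  have hP : 0 < P := ENNReal.toReal_pos hρpos.ne' (measure_ne_top ρ _)
  refine ⟨(√(2 * L / P + 2 * P * L * L / P + 1))⁻¹, √(2 * P / L + 2 * L * P * L / L + 1),
    by positivity, by positivity, fun v v' hv hv' _ hv'2 hftc => ?_⟩
  have hvol : volume.real (Icc s₁ s₂) = L := Real.volume_real_Icc_of_le hs.le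
  have hIcc : ∫ s in s₁..s₂, ‖v s‖ ^ 2 = ∫ s in Icc s₁ s₂, ‖v s‖ ^ 2 := by
    rw [integral_of_le hs.le, integral_Icc_eq_integral_Ioc]
  have hρ := measureReal_mul_setIntegral_sq_norm_le ρ volume hs.le hv hv' hv'2 hftc
  have hLeb := measureReal_mul_setIntegral_sq_norm_le volume ρ hs.le hv hv' hv'2 hftc
  rw [hvol, ← hIcc] at hρ hLeb
  have hA : 0 ≤ ∫ s in s₁..s₂, ‖v s‖ ^ 2 := integral_nonneg hs.le fun _ _ => by positivity
  have hB : 0 ≤ ∫ s in s₁..s₂, ‖v' s‖ ^ 2 := integral_nonneg hs.le fun _ _ => by positivity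
  have hR : 0 ≤ ∫ s in Icc s₁ s₂, ‖v s‖ ^ 2 ∂ρ :=
    setIntegral_nonneg measurableSet_Icc fun _ _ => by positivity
  exact ⟨inv_sqrt_mul_sqrt_le_sqrt (by positivity)
      (add_le_mul_add_of_mul_le hP (by positivity) (by positivity) hR hB hρ),
    sqrt_le_sqrt_mul_sqrt (by positivity)
      (add_le_mul_add_of_mul_le hL (by positivity) (by positivity) hA hB hLeb)⟩

/-- For any nonzero finite positive measure `ρ` on `[s₁,s₂]`, the norm
`‖v‖²_{𝕍,ρ} = ∫‖v‖²dρ + ∫‖v'‖²` is equivalent to the standard `H¹` norm, with constants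
depending only on `ρ, s₁, s₂`. -/
theorem stmt2 {V : Type*} [NormedAddCommGroup V] [InnerProductSpace ℝ V] [CompleteSpace V]
    (s₁ s₂ : ℝ) (hs : s₁ < s₂) (ρ : Measure ℝ) [IsFiniteMeasure ρ]
    (hρpos : 0 < ρ (Set.Icc s₁ s₂)) :
    ∃ c C : ℝ, 0 < c ∧ 0 < C ∧
      ∀ v v' : ℝ → V, Continuous v →
        IntervalIntegrable v' volume s₁ s₂ →
        IntervalIntegrable (fun s => ‖v s‖ ^ 2) volume s₁ s₂ →
        IntervalIntegrable (fun s => ‖v' s‖ ^ 2) volume s₁ s₂ →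
        (∀ a ∈ Set.Icc s₁ s₂, ∀ b ∈ Set.Icc s₁ s₂, v b = v a + ∫ s in a..b, v' s) →
        c * Real.sqrt ((∫ s in s₁..s₂, ‖v s‖ ^ 2) + ∫ s in s₁..s₂, ‖v' s‖ ^ 2) ≤
            Real.sqrt ((∫ s in Set.Icc s₁ s₂, ‖v s‖ ^ 2 ∂ρ) + ∫ s in s₁..s₂, ‖v' s‖ ^ 2) ∧
          Real.sqrt ((∫ s in Set.Icc s₁ s₂, ‖v s‖ ^ 2 ∂ρ) + ∫ s in s₁..s₂, ‖v' s‖ ^ 2) ≤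
            C * Real.sqrt ((∫ s in s₁..s₂, ‖v s‖ ^ 2) + ∫ s in s₁..s₂, ‖v' s‖ ^ 2) :=
  stmt2_general s₁ s₂ hs ρ hρpos
end

section
/- Let $V$ be a Hilbert space, $s_1<s_2$, $\rho$ a nonzero finite positive measure on $[s_1,s_2]$ with total mass $|\rho|$, and $v \in H^1((s_1,s_2),V)$ with continuous representative. Then for every $\lambda \in [s_1,s_2]$: $v(\lambda) = \frac{1}{|\rho|}\int_{[s_1,s_2]} v(s)\,d\rho(s) + \int_{s_1}^{s_2} q_\rho(\lambda,u)\,\partial_\lambda v(u)\,du$, where $q_\rho(\lambda,u) = \rho([s_1,u))/|\rho|$ if $u < \lambda$ and $q_\rho(\lambda,u) = -\rho([u,s_2])/|\rho|$ if $u \ge \lambda$. -/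
/-!
Integrating the fundamental theorem of calculus `v λ = v s + ∫ u in s..λ, v' u` against
`ρ` over `s ∈ [s₁, s₂]` gives `|ρ| • v λ = ∫ v dρ + ∫ (∫ u in s..λ, v' u) dρ(s)`. Writing the
inner interval integral as an integral over `Ioc s λ` minus one over `Ioc λ s` and applying
Fubini, the weight of `v' u` is `ρ([s₁, u))` for `u ≤ λ` and `-ρ([u, s₂])` for `λ < u`; this
differs from `|ρ| q_ρ(λ, u)` only at `u = λ`, a Lebesgue-null point.
-/

open MeasureTheory intervalIntegral

section Fubini

variable {α β E : Type*} [MeasurableSpace α] [MeasurableSpace β] [NormedAddCommGroup E]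
  [NormedSpace ℝ E] {μ : Measure α} {ν : Measure β} {S : Set (α × β)} {f : β → E}

theorem setIntegral_preimage_prodMk_left_eq_integral (hS : MeasurableSet S) (a : α) :
    ∫ b in Prod.mk a ⁻¹' S, f b ∂ν = ∫ b, S.indicator (fun z => f z.2) (a, b) ∂ν := by
  rw [← MeasureTheory.integral_indicator (measurable_prodMk_left hS)]
  rfl

theorem measureReal_preimage_prodMk_right_smul_eq_integral [CompleteSpace E]
    (hS : MeasurableSet S) (b : β) :
    μ.real ((·, b) ⁻¹' S) • f b = ∫ a, S.indicator (fun z => f z.2) (a, b) ∂μ := by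
  rw [← integral_indicator_const _ (measurable_prodMk_right hS)]
  rfl

variable [IsFiniteMeasure μ] [SFinite ν]

theorem integrable_setIntegral_preimage_prodMk_left (hS : MeasurableSet S) (hf : Integrable f ν) :
    Integrable (fun a => ∫ b in Prod.mk a ⁻¹' S, f b ∂ν) μ := by
  simp only [setIntegral_preimage_prodMk_left_eq_integral hS]
  exact ((hf.comp_snd μ).indicator hS).integral_prod_left

variable [CompleteSpace E]

theorem integrable_measureReal_preimage_prodMk_right_smul (hS : MeasurableSet S)
    (hf : Integrable f ν) : Integrable (fun b => μ.real ((·, b) ⁻¹' S) • f b) ν := by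
  simp only [measureReal_preimage_prodMk_right_smul_eq_integral hS]
  exact ((hf.comp_snd μ).indicator hS).integral_prod_right

theorem integral_setIntegral_preimage_prodMk_left (hS : MeasurableSet S) (hf : Integrable f ν) :
    ∫ a, ∫ b in Prod.mk a ⁻¹' S, f b ∂ν ∂μ = ∫ b, μ.real ((·, b) ⁻¹' S) • f b ∂ν := by
  simp only [setIntegral_preimage_prodMk_left_eq_integral hS,
    measureReal_preimage_prodMk_right_smul_eq_integral hS]
  exact integral_integral_swap (f := fun a b => S.indicator (fun z => f z.2) (a, b))
    ((hf.comp_snd μ).indicator hS)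

end Fubini

theorem integral_intervalIntegral_eq_integral_measureReal_smul {E : Type*} [NormedAddCommGroup E]
    [NormedSpace ℝ E] [CompleteSpace E] {μ : Measure ℝ} [IsFiniteMeasure μ] {f : ℝ → E}
    (hf : Integrable f) (c : ℝ) :
    ∫ s, (∫ u in s..c, f u) ∂μ =
      ∫ u, (μ.real {s | s < u ∧ u ≤ c} - μ.real {s | c < u ∧ u ≤ s}) • f u := by
  have hS₁ : MeasurableSet {z : ℝ × ℝ | z.1 < z.2 ∧ z.2 ≤ c} :=
    (measurableSet_lt measurable_fst measurable_snd).inter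
      (measurableSet_le measurable_snd measurable_const)
  have hS₂ : MeasurableSet {z : ℝ × ℝ | c < z.2 ∧ z.2 ≤ z.1} :=
    (measurableSet_lt measurable_const measurable_snd).inter
      (measurableSet_le measurable_snd measurable_fst)
  calc ∫ s, (∫ u in s..c, f u) ∂μ
      = ∫ s, ((∫ u in Prod.mk s ⁻¹' {z : ℝ × ℝ | z.1 < z.2 ∧ z.2 ≤ c}, f u) -
          ∫ u in Prod.mk s ⁻¹' {z : ℝ × ℝ | c < z.2 ∧ z.2 ≤ z.1}, f u) ∂μ := rfl
    _ = ∫ u, (μ.real {s | s < u ∧ u ≤ c} • f u - μ.real {s | c < u ∧ u ≤ s} • f u) := by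
      rw [integral_sub (integrable_setIntegral_preimage_prodMk_left hS₁ hf)
          (integrable_setIntegral_preimage_prodMk_left hS₂ hf),
        integral_setIntegral_preimage_prodMk_left hS₁ hf,
        integral_setIntegral_preimage_prodMk_left hS₂ hf]
      exact (integral_sub (integrable_measureReal_preimage_prodMk_right_smul hS₁ hf)
          (integrable_measureReal_preimage_prodMk_right_smul hS₂ hf)).symm
    _ = _ := by simp only [sub_smul]

theorem measureReal_restrict_Icc_sub_eq_ite {ρ : Measure ℝ} {a b c u : ℝ} (hu : u ∈ Set.Icc a b)
    (huc : u ≠ c) :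
    (ρ.restrict (Set.Icc a b)).real {s | s < u ∧ u ≤ c} -
        (ρ.restrict (Set.Icc a b)).real {s | c < u ∧ u ≤ s} =
      if u < c then ρ.real (Set.Ico a u) else -ρ.real (Set.Icc u b) := by
  rcases huc.lt_or_gt with h | h
  · have hIio : {s | s < u ∧ u ≤ c} = Set.Iio u := by ext; simp [h.le]
    have hempty : {s | c < u ∧ u ≤ s} = ∅ := by ext; simp [h.not_gt]
    rw [if_pos h, hIio, hempty, measureReal_empty, sub_zero,
      measureReal_restrict_apply measurableSet_Iio]
    congr 1
    ext s
    simp only [Set.mem_inter_iff, Set.mem_Iio, Set.mem_Icc, Set.mem_Ico]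
    grind
  · have hempty : {s | s < u ∧ u ≤ c} = ∅ := by ext; simp [h.not_ge]
    have hIci : {s | c < u ∧ u ≤ s} = Set.Ici u := by ext; simp [h]
    rw [if_neg h.not_gt, hempty, hIci, measureReal_empty, zero_sub,
      measureReal_restrict_apply measurableSet_Ici]
    congr 2
    ext s
    simp only [Set.mem_inter_iff, Set.mem_Ici, Set.mem_Icc]
    grind

theorem integral_measureReal_restrict_Icc_sub_smul_indicator {E : Type*} [NormedAddCommGroup E]
    [NormedSpace ℝ E] {ρ : Measure ℝ} {a b c : ℝ} (hab : a ≤ b) (f : ℝ → E) :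
    ∫ u, ((ρ.restrict (Set.Icc a b)).real {s | s < u ∧ u ≤ c} -
        (ρ.restrict (Set.Icc a b)).real {s | c < u ∧ u ≤ s}) • (Set.Ioc a b).indicator f u =
      ∫ u in a..b, (if u < c then ρ.real (Set.Ico a u) else -ρ.real (Set.Icc u b)) • f u := by
  rw [← Set.indicator_smul, MeasureTheory.integral_indicator measurableSet_Ioc, integral_of_le hab]
  refine setIntegral_congr_ae measurableSet_Ioc ?_
  filter_upwards [Measure.ae_ne volume c] with u hne hu
  rw [measureReal_restrict_Icc_sub_eq_ite (Set.Ioc_subset_Icc_self hu) hne]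

theorem stmt3_general {V : Type*} [NormedAddCommGroup V] [InnerProductSpace ℝ V] [CompleteSpace V]
    (s₁ s₂ : ℝ) (ρ : Measure ℝ) [IsFiniteMeasure ρ]
    (hρpos : 0 < ρ (Set.Icc s₁ s₂))
    (v v' : ℝ → V)
    (hρint : Integrable v (ρ.restrict (Set.Icc s₁ s₂)))
    (hv'int : IntervalIntegrable v' volume s₁ s₂)
    (hftc : ∀ a ∈ Set.Icc s₁ s₂, ∀ b ∈ Set.Icc s₁ s₂, v b = v a + ∫ s in a..b, v' s)
    (lam : ℝ) (hlam : lam ∈ Set.Icc s₁ s₂) :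
    v lam = (ρ (Set.Icc s₁ s₂)).toReal⁻¹ • (∫ s in Set.Icc s₁ s₂, v s ∂ρ) +
      ∫ u in s₁..s₂,
        (if u < lam then (ρ (Set.Ico s₁ u)).toReal / (ρ (Set.Icc s₁ s₂)).toReal
          else -((ρ (Set.Icc u s₂)).toReal / (ρ (Set.Icc s₁ s₂)).toReal)) • v' u := by
  have hs : s₁ ≤ s₂ := hlam.1.trans hlam.2
  set M := (ρ (Set.Icc s₁ s₂)).toReal
  have hM : M ≠ 0 := ENNReal.toReal_ne_zero.2 ⟨hρpos.ne', measure_ne_top ρ _⟩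
  set w := (Set.Ioc s₁ s₂).indicator v'
  have hw : Integrable w := (integrable_indicator_iff measurableSet_Ioc).2
    ((intervalIntegrable_iff_integrableOn_Ioc_of_le hs).1 hv'int)
  have hprimitive : ∀ s ∈ Set.Icc s₁ s₂, ∫ u in s..lam, w u = v lam - v s := fun s hs' => by
    rw [hftc s hs' lam hlam, add_sub_cancel_left]
    refine integral_congr_ae (.of_forall fun u hu => Set.indicator_of_mem ?_ v')
    exact Set.Ioc_subset_Ioc (le_min hs'.1 hlam.1) (max_le hs'.2 hlam.2) hu
  have haverage : ∫ s, (∫ u in s..lam, w u) ∂(ρ.restrict (Set.Icc s₁ s₂)) =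
      M • v lam - ∫ s in Set.Icc s₁ s₂, v s ∂ρ := by
    rw [setIntegral_congr_fun measurableSet_Icc hprimitive,
      integral_sub (integrable_const _) hρint, setIntegral_const]
    rfl
  have hweight : ∀ u, (if u < lam then (ρ (Set.Ico s₁ u)).toReal / M
      else -((ρ (Set.Icc u s₂)).toReal / M)) • v' u =
      M⁻¹ • (if u < lam then ρ.real (Set.Ico s₁ u) else -ρ.real (Set.Icc u s₂)) • v' u := by
    intro u
    rw [smul_smul]
    split_ifs <;> simp only [div_eq_inv_mul, mul_neg, measureReal_def]
  rw [integral_intervalIntegral_eq_integral_measureReal_smul hw,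
    integral_measureReal_restrict_Icc_sub_smul_indicator hs] at haverage
  rw [intervalIntegral.integral_congr fun u _ => hweight u, intervalIntegral.integral_smul,
    haverage, smul_sub, inv_smul_smul₀ hM]
  abel

/-- representation formula
`v(λ) = |ρ|⁻¹ ∫ v dρ + ∫_{s₁}^{s₂} q_ρ(λ,u) ∂v(u) du`, where
`q_ρ(λ,u) = ρ([s₁,u))/|ρ|` for `u < λ` and `q_ρ(λ,u) = -ρ([u,s₂])/|ρ|` for `u ≥ λ`. -/
theorem stmt3 {V : Type*} [NormedAddCommGroup V] [InnerProductSpace ℝ V] [CompleteSpace V]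
    (s₁ s₂ : ℝ) (hs : s₁ < s₂) (ρ : Measure ℝ) [IsFiniteMeasure ρ]
    (hsupp : ρ (Set.Icc s₁ s₂)ᶜ = 0) (hρpos : 0 < ρ (Set.Icc s₁ s₂))
    (v v' : ℝ → V) (hc : Continuous v)
    (hρint : Integrable v (ρ.restrict (Set.Icc s₁ s₂)))
    (hv'int : IntervalIntegrable v' volume s₁ s₂)
    (hftc : ∀ a ∈ Set.Icc s₁ s₂, ∀ b ∈ Set.Icc s₁ s₂, v b = v a + ∫ s in a..b, v' s)
    (lam : ℝ) (hlam : lam ∈ Set.Icc s₁ s₂) :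
    v lam = (ρ (Set.Icc s₁ s₂)).toReal⁻¹ • (∫ s in Set.Icc s₁ s₂, v s ∂ρ) +
      ∫ u in s₁..s₂,
        (if u < lam then (ρ (Set.Ico s₁ u)).toReal / (ρ (Set.Icc s₁ s₂)).toReal
          else -((ρ (Set.Icc u s₂)).toReal / (ρ (Set.Icc s₁ s₂)).toReal)) • v' u :=
  stmt3_general s₁ s₂ ρ hρpos v v' hρint hv'int hftc lam hlam
end

section
/- Let $\chi_{s_1}, \chi_{s_2} > 0$ and $X:[s_1,s_2]\to[0,\infty)$ nondecreasing with $X(s_1)=0$. Define, for $\lambda,\lambda_0\in[s_1,s_2]$, $\hat\kappa(\lambda,\lambda_0) = \frac{(1+\chi_{s_2}(X(s_2)-X(\max(\lambda,\lambda_0))))(1+\chi_{s_1}X(\min(\lambda,\lambda_0)))}{\chi_{s_1}+\chi_{s_2}+\chi_{s_1}\chi_{s_2}X(s_2)}$. Then $\hat\kappa$ satisfies: (i) $\hat\kappa$ is symmetric in $(\lambda,\lambda_0)$; (ii) $\partial_\lambda\hat\kappa(\lambda,\lambda_0) = \frac{\chi_{s_1}}{\chi_\lambda}\hat\kappa(s_1,\lambda_0)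 - \frac{\mathbf 1_{[\lambda_0,s_2]}(\lambda)}{\chi_\lambda}$ whenever $X$ is differentiable at $\lambda\ne\lambda_0$ with $X'(\lambda)=1/\chi_\lambda$; and (iii) $\chi_{s_1}\hat\kappa(s_1,\lambda_0) + \chi_{s_2}\hat\kappa(s_2,\lambda_0) = 1$. -/
/-!
Off the diagonal the kernel is an affine function of `X λ` times a constant, so its
`λ`-derivative is `χ₁ X'(λ)` (for `λ < λ₀`) or `-χ₂ X'(λ)` (for `λ > λ₀`) times a constant.
Using `X s₁ = 0`, both the constraint and the second derivative formula reduce to the identity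
`χ₁ (1 + χ₂ (X s₂ - X λ₀)) + χ₂ (1 + χ₁ X λ₀) = χ₁ + χ₂ + χ₁ χ₂ X s₂`.
-/

open Set

namespace TwoAtomKernel

def denom (χ₁ χ₂ s₂ : ℝ) (X : ℝ → ℝ) : ℝ := χ₁ + χ₂ + χ₁ * χ₂ * X s₂

noncomputable def kernel (χ₁ χ₂ s₂ : ℝ) (X : ℝ → ℝ) (lam lam₀ : ℝ) : ℝ :=
  (1 + χ₂ * (X s₂ - X (max lam lam₀))) * (1 + χ₁ * X (min lam lam₀)) / denom χ₁ χ₂ s₂ X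

variable {χ₁ χ₂ s₁ s₂ lam lam₀ x' : ℝ} {X : ℝ → ℝ}

theorem denom_pos (hχ₁ : 0 < χ₁) (hχ₂ : 0 < χ₂) (hX : MonotoneOn X (Icc s₁ s₂))
    (hX₀ : X s₁ = 0) (hs : s₁ ≤ s₂) : 0 < denom χ₁ χ₂ s₂ X := by
  have hXs₂ : 0 ≤ X s₂ := hX₀ ▸ hX (left_mem_Icc.2 hs) (right_mem_Icc.2 hs) hs
  unfold denom
  positivity

theorem kernel_comm (lam lam₀ : ℝ) : kernel χ₁ χ₂ s₂ X lam lam₀ = kernel χ₁ χ₂ s₂ X lam₀ lam := by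
  rw [kernel, kernel, max_comm, min_comm]

theorem kernel_of_le (h : lam ≤ lam₀) :
    kernel χ₁ χ₂ s₂ X lam lam₀ =
      (1 + χ₂ * (X s₂ - X lam₀)) * (1 + χ₁ * X lam) / denom χ₁ χ₂ s₂ X := by
  rw [kernel, max_eq_right h, min_eq_left h]

theorem kernel_of_ge (h : lam₀ ≤ lam) :
    kernel χ₁ χ₂ s₂ X lam lam₀ =
      (1 + χ₂ * (X s₂ - X lam)) * (1 + χ₁ * X lam₀) / denom χ₁ χ₂ s₂ X := by
  rw [kernel_comm, kernel_of_le h, mul_comm (1 + χ₂ * _)]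

theorem kernel_left (hX₀ : X s₁ = 0) (h : s₁ ≤ lam₀) :
    kernel χ₁ χ₂ s₂ X s₁ lam₀ = (1 + χ₂ * (X s₂ - X lam₀)) / denom χ₁ χ₂ s₂ X := by
  rw [kernel_of_le h, hX₀, mul_zero, add_zero, mul_one]

theorem kernel_right (h : lam₀ ≤ s₂) :
    kernel χ₁ χ₂ s₂ X s₂ lam₀ = (1 + χ₁ * X lam₀) / denom χ₁ χ₂ s₂ X := by
  rw [kernel_of_ge h, sub_self, mul_zero, add_zero, one_mul]

theorem kernel_constraint (hX₀ : X s₁ = 0) (h₀ : lam₀ ∈ Icc s₁ s₂)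
    (hD : denom χ₁ χ₂ s₂ X ≠ 0) :
    χ₁ * kernel χ₁ χ₂ s₂ X s₁ lam₀ + χ₂ * kernel χ₁ χ₂ s₂ X s₂ lam₀ = 1 := by
  rw [kernel_left hX₀ h₀.1, kernel_right h₀.2]
  field_simp
  rw [denom]
  ring

theorem hasDerivAt_kernel_of_lt (hX₀ : X s₁ = 0) (hs₁ : s₁ ≤ lam₀) (h : lam < lam₀)
    (hX' : HasDerivAt X x' lam) :
    HasDerivAt (fun l => kernel χ₁ χ₂ s₂ X l lam₀)
      (χ₁ * x' * kernel χ₁ χ₂ s₂ X s₁ lam₀) lam := by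
  have hEq : (fun l => kernel χ₁ χ₂ s₂ X l lam₀) =ᶠ[nhds lam]
      fun l => (1 + χ₂ * (X s₂ - X lam₀)) * (1 + χ₁ * X l) / denom χ₁ χ₂ s₂ X := by
    filter_upwards [Iio_mem_nhds h] with l hl
    exact kernel_of_le hl.le
  have hDeriv := (((hX'.const_mul χ₁).const_add 1).const_mul
    (1 + χ₂ * (X s₂ - X lam₀))).div_const (denom χ₁ χ₂ s₂ X)
  refine (hDeriv.congr_of_eventuallyEq hEq).congr_deriv ?_
  rw [kernel_left hX₀ hs₁]
  ring

theorem hasDerivAt_kernel_of_gt (hX₀ : X s₁ = 0) (hs₁ : s₁ ≤ lam₀)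
    (hD : denom χ₁ χ₂ s₂ X ≠ 0) (h : lam₀ < lam) (hX' : HasDerivAt X x' lam) :
    HasDerivAt (fun l => kernel χ₁ χ₂ s₂ X l lam₀)
      (χ₁ * x' * kernel χ₁ χ₂ s₂ X s₁ lam₀ - x') lam := by
  have hEq : (fun l => kernel χ₁ χ₂ s₂ X l lam₀) =ᶠ[nhds lam]
      fun l => (1 + χ₂ * (X s₂ - X l)) * (1 + χ₁ * X lam₀) / denom χ₁ χ₂ s₂ X := by
    filter_upwards [Ioi_mem_nhds h] with l hl
    exact kernel_of_ge hl.le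
  have hDeriv := ((((hX'.const_sub (X s₂)).const_mul χ₂).const_add 1).mul_const
    (1 + χ₁ * X lam₀)).div_const (denom χ₁ χ₂ s₂ X)
  refine (hDeriv.congr_of_eventuallyEq hEq).congr_deriv ?_
  rw [kernel_left hX₀ hs₁]
  field_simp
  rw [denom]
  ring

end TwoAtomKernel

open TwoAtomKernel

theorem stmt16_general (s₁ s₂ : ℝ)
    (χs₁ χs₂ : ℝ) (hχ1 : 0 < χs₁) (hχ2 : 0 < χs₂)
    (X : ℝ → ℝ) (hX : MonotoneOn X (Set.Icc s₁ s₂)) (hX0 : X s₁ = 0)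
    (κ : ℝ → ℝ → ℝ)
    (hκ : ∀ lam lam₀, κ lam lam₀ =
      (1 + χs₂ * (X s₂ - X (max lam lam₀))) * (1 + χs₁ * X (min lam lam₀)) /
        (χs₁ + χs₂ + χs₁ * χs₂ * X s₂)) :
    (∀ lam lam₀, κ lam lam₀ = κ lam₀ lam) ∧
    (∀ lam lam₀, lam ∈ Set.Icc s₁ s₂ → lam₀ ∈ Set.Icc s₁ s₂ → lam ≠ lam₀ →
      ∀ χlam : ℝ, HasDerivAt X (1 / χlam) lam →
        HasDerivAt (fun l => κ l lam₀)
          (χs₁ / χlam * κ s₁ lam₀ - (if lam ∈ Set.Icc lam₀ s₂ then 1 else 0) / χlam) lam) ∧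
    (∀ lam₀ ∈ Set.Icc s₁ s₂, χs₁ * κ s₁ lam₀ + χs₂ * κ s₂ lam₀ = 1) := by
  obtain rfl : κ = kernel χs₁ χs₂ s₂ X := funext₂ hκ
  have hD : ∀ lam₀ ∈ Icc s₁ s₂, denom χs₁ χs₂ s₂ X ≠ 0 := fun _ h₀ =>
    (denom_pos hχ1 hχ2 hX hX0 (h₀.1.trans h₀.2)).ne'
  refine ⟨kernel_comm, ?_, fun lam₀ h₀ => kernel_constraint hX0 h₀ (hD lam₀ h₀)⟩
  intro lam lam₀ hlam hlam₀ hne χlam hX'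
  rcases hne.lt_or_gt with h | h
  · rw [if_neg fun hmem => h.not_ge hmem.1]
    convert hasDerivAt_kernel_of_lt hX0 hlam₀.1 h hX' using 1
    ring
  · rw [if_pos ⟨h.le, hlam.2⟩]
    convert hasDerivAt_kernel_of_gt hX0 hlam₀.1 (hD lam₀ hlam₀) h hX' using 1
    ring

/-- the explicit solution `κ̂` for the kernel of `𝕎` when `ρ = δ_{s₁} + δ_{s₂}`:
it is symmetric, satisfies the first-order ODE
`∂_λ κ̂(λ,λ₀) = (χ_{s₁}/χ_λ) κ̂(s₁,λ₀) - 1_{[λ₀,s₂]}(λ)/χ_λ` away from `λ₀`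
(where `X'(λ) = 1/χ_λ`), and satisfies the constraint
`χ_{s₁} κ̂(s₁,λ₀) + χ_{s₂} κ̂(s₂,λ₀) = 1`. -/
theorem stmt16 (s₁ s₂ : ℝ) (hs : s₁ < s₂)
    (χs₁ χs₂ : ℝ) (hχ1 : 0 < χs₁) (hχ2 : 0 < χs₂)
    (X : ℝ → ℝ) (hX : MonotoneOn X (Set.Icc s₁ s₂)) (hX0 : X s₁ = 0)
    (κ : ℝ → ℝ → ℝ)
    (hκ : ∀ lam lam₀, κ lam lam₀ =
      (1 + χs₂ * (X s₂ - X (max lam lam₀))) * (1 + χs₁ * X (min lam lam₀)) /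
        (χs₁ + χs₂ + χs₁ * χs₂ * X s₂)) :
    (∀ lam lam₀, κ lam lam₀ = κ lam₀ lam) ∧
    (∀ lam lam₀, lam ∈ Set.Icc s₁ s₂ → lam₀ ∈ Set.Icc s₁ s₂ → lam ≠ lam₀ →
      ∀ χlam : ℝ, HasDerivAt X (1 / χlam) lam →
        HasDerivAt (fun l => κ l lam₀)
          (χs₁ / χlam * κ s₁ lam₀ - (if lam ∈ Set.Icc lam₀ s₂ then 1 else 0) / χlam) lam) ∧
    (∀ lam₀ ∈ Set.Icc s₁ s₂, χs₁ * κ s₁ lam₀ + χs₂ * κ s₂ lam₀ = 1) :=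
  stmt16_general s₁ s₂ χs₁ χs₂ hχ1 hχ2 X hX hX0 κ hκ
end
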